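/- arXiv:1705.02958 — 4 statements merged into one kernel-verified Lean document; each statement's English description precedes it below -/
import Mathlib

section
/- The supertrace str(a) = a(0) on the Weyl algebra satisfies str(a * b) = (−1)^{|a||b|} str(b * a), where |a| denotes the parity of a in the Z_2-grading by even/odd polynomials and * is the Moyal product. -/
open MvPolynomial

variable (n : ℕ)

/-- The single-contraction bidifferential operator `Σ π^{jk} ∂_{y^j} ⊗ ∂_{y^k}`,
acting on polynomials in a doubled set of variables: the left factor lives in the
`Sum.inl` copy, the right factor in the `Sum.inr` copy. -/
noncomputable def moyalStep (π : Matrix (Fin (2 * n)) (Fin (2 * n)) ℂ) :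
    Module.End ℂ (MvPolynomial (Fin (2 * n) ⊕ Fin (2 * n)) ℂ) :=
  ∑ j : Fin (2 * n), ∑ k : Fin (2 * n),
    π j k • ((pderiv (Sum.inl j)).toLinearMap ∘ₗ (pderiv (Sum.inr k)).toLinearMap)

/-- The Moyal star product `a ∗ b = a · exp(i ∂_{y^j}^← π^{jk} ∂_{y^k}^→) · b`
on the polynomial Weyl algebra `A_n = ℂ[y^1,…,y^{2n}]`.  Since `a` is a
polynomial, the exponential series truncates at `totalDegree a`. -/
noncomputable def moyal (π : Matrix (Fin (2 * n)) (Fin (2 * n)) ℂ)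
    (a b : MvPolynomial (Fin (2 * n)) ℂ) : MvPolynomial (Fin (2 * n)) ℂ :=
  ∑ m ∈ Finset.range (a.totalDegree + 1),
    ((Complex.I ^ m) / (m.factorial : ℂ)) •
      (rename (Sum.elim id id))
        (((moyalStep n π) ^ m) (rename Sum.inl a * rename Sum.inr b))

/-- The parity automorphism `a(y) ↦ a(-y)`. -/
noncomputable def parityMap :
    MvPolynomial (Fin (2 * n)) ℂ →ₐ[ℂ] MvPolynomial (Fin (2 * n)) ℂ :=
  aeval fun j => -(X j)

/-!
Write `a ∗ b = ∑ₘ iᵐ/m! • B_m(a, b)`, where `B_m(a, b)` contracts `m` derivatives of `a` with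
`m` derivatives of `b` through `π`. Antisymmetry of `π` gives `B_m(b, a) = (-1)ᵐ B_m(a, b)`.
At `y = 0`, `B_m(a, b)` only sees the degree-`m` part of `a`, so `B_m(a(-y), b)(0) =
(-1)ᵐ B_m(a, b)(0)`, and likewise for `b`. Hence a nonzero `m`-th term of `str(a ∗ b)` forces
both parities of `a` and `b` to be `(-1)ᵐ`, and then the sign `(-1)ᵐ` relating it to the `m`-th
term of `str(b ∗ a)` is `(-1)^{|a||b|}`.
-/

variable {n}

namespace MvPolynomial

variable {σ τ R : Type*} [CommSemiring R]

theorem totalDegree_pderiv_lt {i : σ} {p : MvPolynomial σ R} (h : pderiv i p ≠ 0) :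
    (pderiv i p).totalDegree < p.totalDegree := by
  obtain ⟨m, hm, hdeg⟩ :=
    Finset.exists_mem_eq_sup _ (support_nonempty.mpr h) fun s => s.sum fun _ e => e
  have hm' : m + Finsupp.single i 1 ∈ p.support := by
    rw [mem_support_iff, coeff_pderiv] at hm
    exact mem_support_iff.mpr (left_ne_zero_of_mul hm)
  calc (pderiv i p).totalDegree = m.sum fun _ e => e := hdeg
    _ < (m + Finsupp.single i 1).sum fun _ e => e := by
      rw [Finsupp.sum_add_index' (fun _ => rfl) (fun _ _ _ => rfl),
        Finsupp.sum_single_index rfl]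
      omega
    _ ≤ p.totalDegree := le_totalDegree hm'

theorem pderiv_rename_of_forall_ne {f : σ → τ} {i : τ} (hi : ∀ x, f x ≠ i)
    (p : MvPolynomial σ R) : pderiv i (rename f p) = 0 :=
  pderiv_eq_zero_of_notMem_vars fun h => by
    obtain ⟨x, -, hx⟩ := mem_vars_rename f p h
    exact hi x hx

end MvPolynomial

theorem parityMap_X (i : Fin (2 * n)) : parityMap n (X i) = -X i :=
  aeval_X _ _

theorem pderiv_parityMap (i : Fin (2 * n)) (p : MvPolynomial (Fin (2 * n)) ℂ) :
    pderiv i (parityMap n p) = -parityMap n (pderiv i p) := by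
  induction p using MvPolynomial.induction_on with
  | C a => simp [parityMap]
  | add p q hp hq => simp only [map_add, hp, hq, neg_add]
  | mul_X p j hp =>
    have hX : parityMap n (pderiv i (X j)) = pderiv i (X j) := by
      rcases eq_or_ne j i with rfl | hji
      · simp
      · simp [pderiv_X_of_ne hji]
    simp only [map_mul, Derivation.leibniz, hp, hX, parityMap_X, map_neg, map_add, smul_eq_mul]
    ring

theorem constantCoeff_parityMap (p : MvPolynomial (Fin (2 * n)) ℂ) :
    constantCoeff (parityMap n p) = constantCoeff p := by
  induction p using MvPolynomial.induction_on with
  | C a => simp [parityMap]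
  | add p q hp hq => simp only [map_add, hp, hq]
  | mul_X p j _ => simp [parityMap_X]

section MoyalTerm

variable (π : Matrix (Fin (2 * n)) (Fin (2 * n)) ℂ)

noncomputable def moyalTerm (m : ℕ) (a b : MvPolynomial (Fin (2 * n)) ℂ) :
    MvPolynomial (Fin (2 * n)) ℂ :=
  rename (Sum.elim id id) ((moyalStep n π ^ m) (rename Sum.inl a * rename Sum.inr b))

theorem moyal_eq_sum_moyalTerm (a b : MvPolynomial (Fin (2 * n)) ℂ) :
    moyal n π a b = ∑ m ∈ Finset.range (a.totalDegree + 1),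
      (Complex.I ^ m / (m.factorial : ℂ)) • moyalTerm π m a b :=
  rfl

theorem moyalStep_rename_mul (a b : MvPolynomial (Fin (2 * n)) ℂ) :
    moyalStep n π (rename Sum.inl a * rename Sum.inr b) =
      ∑ j, ∑ k, π j k • (rename Sum.inl (pderiv j a) * rename Sum.inr (pderiv k b)) := by
  simp only [moyalStep, LinearMap.sum_apply, LinearMap.smul_apply, LinearMap.comp_apply,
    Derivation.coeFn_coe, Derivation.leibniz, pderiv_rename Sum.inl_injective,
    pderiv_rename Sum.inr_injective, pderiv_rename_of_forall_ne fun _ => Sum.inl_ne_inr,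
    pderiv_rename_of_forall_ne fun _ => Sum.inr_ne_inl, smul_eq_mul, zero_mul,
    add_zero, zero_add, mul_comm]

theorem moyalTerm_zero (a b : MvPolynomial (Fin (2 * n)) ℂ) : moyalTerm π 0 a b = a * b := by
  simp [moyalTerm, rename_rename]

theorem moyalTerm_succ (m : ℕ) (a b : MvPolynomial (Fin (2 * n)) ℂ) :
    moyalTerm π (m + 1) a b =
      ∑ j, ∑ k, π j k • moyalTerm π m (pderiv j a) (pderiv k b) := by
  simp only [moyalTerm, pow_succ, Module.End.mul_apply, moyalStep_rename_mul, map_sum, map_smul]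

theorem moyalTerm_zero_left (m : ℕ) (b : MvPolynomial (Fin (2 * n)) ℂ) :
    moyalTerm π m 0 b = 0 := by
  simp [moyalTerm]

theorem moyalTerm_neg_left (m : ℕ) (a b : MvPolynomial (Fin (2 * n)) ℂ) :
    moyalTerm π m (-a) b = -moyalTerm π m a b := by
  simp [moyalTerm]

theorem moyalTerm_eq_zero_of_totalDegree_lt {m : ℕ} {a : MvPolynomial (Fin (2 * n)) ℂ}
    (h : a.totalDegree < m) (b : MvPolynomial (Fin (2 * n)) ℂ) : moyalTerm π m a b = 0 := by
  induction m generalizing a b with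
  | zero => exact absurd h (Nat.not_lt_zero _)
  | succ m ih =>
    rw [moyalTerm_succ]
    refine Finset.sum_eq_zero fun j _ => Finset.sum_eq_zero fun k _ => ?_
    by_cases hj : pderiv j a = 0
    · rw [hj, moyalTerm_zero_left, smul_zero]
    · have := totalDegree_pderiv_lt hj
      rw [ih (by omega), smul_zero]

theorem moyalTerm_swap (hanti : π.transpose = -π) (m : ℕ) (a b : MvPolynomial (Fin (2 * n)) ℂ) :
    moyalTerm π m b a = (-1 : ℂ) ^ m • moyalTerm π m a b := by
  induction m generalizing a b with
  | zero => simp [moyalTerm_zero, mul_comm]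
  | succ m ih =>
    rw [moyalTerm_succ, moyalTerm_succ π m a, Finset.sum_comm (s := Finset.univ), Finset.smul_sum]
    refine Finset.sum_congr rfl fun j _ => ?_
    rw [Finset.smul_sum]
    refine Finset.sum_congr rfl fun k _ => ?_
    have hπ : π k j = -π j k := by simpa using congrFun₂ hanti j k
    rw [ih, hπ, pow_succ]
    module

theorem constantCoeff_moyalTerm_parityMap_left (m : ℕ) (a b : MvPolynomial (Fin (2 * n)) ℂ) :
    constantCoeff (moyalTerm π m (parityMap n a) b) =
      (-1 : ℂ) ^ m * constantCoeff (moyalTerm π m a b) := by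
  induction m generalizing a b with
  | zero => simp [moyalTerm_zero, constantCoeff_parityMap]
  | succ m ih =>
    simp only [moyalTerm_succ, map_sum, constantCoeff_smul, pderiv_parityMap, moyalTerm_neg_left,
      map_neg, ih, Finset.mul_sum, smul_eq_mul, pow_succ]
    refine Finset.sum_congr rfl fun j _ => Finset.sum_congr rfl fun k _ => ?_
    ring

theorem constantCoeff_moyalTerm_of_parityMap_eq {ε : Bool} {a : MvPolynomial (Fin (2 * n)) ℂ}
    (h : parityMap n a = if ε then -a else a) (m : ℕ) (b : MvPolynomial (Fin (2 * n)) ℂ) :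
    (if ε then -1 else 1) * constantCoeff (moyalTerm π m a b) =
      (-1 : ℂ) ^ m * constantCoeff (moyalTerm π m a b) := by
  rw [← constantCoeff_moyalTerm_parityMap_left, h]
  cases ε <;> simp [moyalTerm_neg_left]

theorem constantCoeff_moyal_eq_sum {a : MvPolynomial (Fin (2 * n)) ℂ} {N : ℕ}
    (hN : a.totalDegree ≤ N) (b : MvPolynomial (Fin (2 * n)) ℂ) :
    constantCoeff (moyal n π a b) = ∑ m ∈ Finset.range (N + 1),
      Complex.I ^ m / (m.factorial : ℂ) * constantCoeff (moyalTerm π m a b) := by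
  simp only [moyal_eq_sum_moyalTerm, map_sum, constantCoeff_smul, smul_eq_mul]
  refine Finset.sum_subset (by simpa using hN) fun m _ hm => ?_
  rw [Finset.mem_range, not_lt] at hm
  rw [moyalTerm_eq_zero_of_totalDegree_lt π (by omega), map_zero, mul_zero]

end MoyalTerm

theorem supertrace_supersymmetry_general (π : Matrix (Fin (2 * n)) (Fin (2 * n)) ℂ)
    (hanti : π.transpose = -π)
    (a b : MvPolynomial (Fin (2 * n)) ℂ) (εa εb : Bool)
    (ha : parityMap n a = if εa then -a else a)
    (hb : parityMap n b = if εb then -b else b) :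
    constantCoeff (moyal n π a b) =
      (if εa && εb then -1 else 1) * constantCoeff (moyal n π b a) := by
  rw [constantCoeff_moyal_eq_sum π (le_max_left a.totalDegree b.totalDegree),
    constantCoeff_moyal_eq_sum π (le_max_right a.totalDegree b.totalDegree), Finset.mul_sum]
  refine Finset.sum_congr rfl fun m _ => ?_
  rw [mul_left_comm]
  congr 1
  have hab := congrArg constantCoeff (moyalTerm_swap π hanti m a b)
  have hba := congrArg constantCoeff (moyalTerm_swap π hanti m b a)
  have hpa := constantCoeff_moyalTerm_of_parityMap_eq π ha m b
  have hpb := constantCoeff_moyalTerm_of_parityMap_eq π hb m a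
  rw [constantCoeff_smul, smul_eq_mul] at hab hba
  generalize constantCoeff (moyalTerm π m a b) = x at *
  generalize constantCoeff (moyalTerm π m b a) = y at *
  cases εa <;> cases εb <;>
    simp only [Bool.false_eq_true, Bool.and_self, Bool.and_false, Bool.false_and, if_true,
      if_false, one_mul, neg_one_mul] at hpa hpb ⊢
  · linear_combination hpa - hab
  · linear_combination hpa - hab
  · linear_combination hba - hpb
  · linear_combination hab - hpa

/-- the supertrace `str a = a(0)` satisfies
`str(a ∗ b) = (-1)^{|a||b|} str(b ∗ a)` for homogeneous (even/odd) `a, b`. -/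
theorem supertrace_supersymmetry (π : Matrix (Fin (2 * n)) (Fin (2 * n)) ℂ)
    (hanti : π.transpose = -π) (hnondeg : IsUnit π.det)
    (a b : MvPolynomial (Fin (2 * n)) ℂ) (εa εb : Bool)
    (ha : parityMap n a = if εa then -a else a)
    (hb : parityMap n b = if εb then -b else b) :
    constantCoeff (moyal n π a b) =
      (if εa && εb then -1 else 1) * constantCoeff (moyal n π b a) :=
  supertrace_supersymmetry_general π hanti a b εa εb ha hb
end

section
/- The bilinear form B(a,b) = str(a*b) on the Weyl algebra satisfies B(a,b) = B(b̃, a), where b̃(y) = b(−y). -/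
open MvPolynomial

variable (n : ℕ)

/-!
Write `a ⊗ b` for `rename Sum.inl a * rename Sum.inr b`, so that `B(a, b)` is
`∑ₘ iᵐ/m! · const(Pᵐ (a ⊗ b))` with `P = moyalStep n π`. The twist
`p(x, y) ↦ p(y, -x)` sends `a ⊗ b` to `b̃ ⊗ a`; both the swap of the two copies and the sign
change of the right copy anticommute with `P` (the swap because `π` is antisymmetric), so the
twist commutes with `P` and preserves constant coefficients. Hence the two series agree term by
term once both are truncated at a common degree, which is harmless because `P` lowers the degree
in the left variables by one, so `const(Pᵐ (a ⊗ b)) = 0` for `m > deg a`.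
-/

namespace MvPolynomial

variable {R σ τ : Type*} [CommRing R]

theorem pderiv_pderiv_comm (i j : σ) (p : MvPolynomial σ R) :
    pderiv i (pderiv j p) = pderiv j (pderiv i p) := by
  have h : ⁅(pderiv i : Derivation R (MvPolynomial σ R) (MvPolynomial σ R)), pderiv j⁆ =
      (0 : Derivation R (MvPolynomial σ R) (MvPolynomial σ R)) := by
    classical
    refine derivation_ext fun k => ?_
    simp [Derivation.commutator_apply, pderiv_X, Pi.single_apply, apply_ite]
  simpa [Derivation.commutator_apply, sub_eq_zero] using DFunLike.congr_fun h p

noncomputable def scaleVars (c : σ → R) : MvPolynomial σ R →ₐ[R] MvPolynomial σ R :=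
  aeval fun i => c i • X i

theorem pderiv_scaleVars (c : σ → R) (i : σ) (p : MvPolynomial σ R) :
    pderiv i (scaleVars c p) = c i • scaleVars c (pderiv i p) := by
  classical
  induction p using MvPolynomial.induction_on with
  | C r => simp [scaleVars]
  | add p q hp hq => simp [hp, hq]
  | mul_X p j hp =>
    simp only [scaleVars, map_mul, aeval_X, Derivation.leibniz, pderiv_X, smul_eq_mul] at hp ⊢
    rw [hp]
    rcases eq_or_ne i j with rfl | h
    · simp
    · simp [h]

theorem constantCoeff_scaleVars (c : σ → R) (p : MvPolynomial σ R) :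
    constantCoeff (scaleVars c p) = constantCoeff p := by
  induction p using MvPolynomial.induction_on with
  | C r => simp [scaleVars]
  | add p q hp hq => simp [hp, hq]
  | mul_X p j hp => simp [scaleVars]

theorem scaleVars_rename (c : τ → R) (f : σ → τ) (p : MvPolynomial σ R) :
    scaleVars c (rename f p) = rename f (scaleVars (c ∘ f) p) := by
  suffices (scaleVars c).comp (rename f) = (rename f).comp (scaleVars (c ∘ f)) from
    AlgHom.congr_fun this p
  ext i
  simp [scaleVars]

theorem scaleVars_one : scaleVars (1 : σ → R) = AlgHom.id R _ := by
  ext i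
  simp [scaleVars]

theorem IsWeightedHomogeneous.rename {M : Type*} [AddCommMonoid M] {w : τ → M} {m : M}
    {φ : MvPolynomial σ R} (f : σ → τ) (h : φ.IsWeightedHomogeneous (w ∘ f) m) :
    (rename f φ).IsWeightedHomogeneous w m := by
  rw [← φ.support_sum_monomial_coeff, map_sum]
  simp_rw [rename_monomial]
  refine IsWeightedHomogeneous.sum _ _ _ fun d hd => isWeightedHomogeneous_monomial _ _ _ ?_
  rw [← h (mem_support_iff.mp hd), Finsupp.weight_apply, Finsupp.weight_apply]
  exact Finsupp.sum_mapDomain_index (fun _ => zero_smul ℕ _) fun _ _ _ => add_smul _ _ _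

noncomputable def tensorTwist : MvPolynomial (σ ⊕ σ) R →ₐ[R] MvPolynomial (σ ⊕ σ) R :=
  (rename Sum.swap).comp (scaleVars (Sum.elim 1 (-1)))

theorem tensorTwist_rename_inl_mul_rename_inr (a b : MvPolynomial σ R) :
    tensorTwist (rename Sum.inl a * rename Sum.inr b)
      = rename Sum.inl (scaleVars (-1) b) * rename Sum.inr a := by
  simp only [tensorTwist, AlgHom.comp_apply, map_mul, scaleVars_rename]
  rw [mul_comm, rename_rename, rename_rename, Sum.elim_comp_inl, Sum.elim_comp_inr, scaleVars_one,
    AlgHom.id_apply]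
  rfl

theorem constantCoeff_tensorTwist (p : MvPolynomial (σ ⊕ σ) R) :
    constantCoeff (tensorTwist p) = constantCoeff p := by
  rw [tensorTwist, AlgHom.comp_apply, constantCoeff_rename, constantCoeff_scaleVars]

end MvPolynomial

open MvPolynomial

theorem parityMap_eq_scaleVars : parityMap n = scaleVars (-1) := by
  ext i
  simp [parityMap, scaleVars]

def leftWeight (σ : Type*) : σ ⊕ σ → ℤ := Sum.elim 1 0

section Moyal

variable {n} (π : Matrix (Fin (2 * n)) (Fin (2 * n)) ℂ)

theorem moyalStep_apply (p : MvPolynomial (Fin (2 * n) ⊕ Fin (2 * n)) ℂ) :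
    moyalStep n π p
      = ∑ j, ∑ k, π j k • pderiv (Sum.inl j) (pderiv (Sum.inr k) p) := by
  simp [moyalStep, LinearMap.sum_apply]

theorem moyalStep_rename_swap (hanti : π.transpose = -π)
    (p : MvPolynomial (Fin (2 * n) ⊕ Fin (2 * n)) ℂ) :
    moyalStep n π (rename Sum.swap p) = -rename Sum.swap (moyalStep n π p) := by
  have hswap : Function.Injective (Sum.swap : Fin (2 * n) ⊕ Fin (2 * n) → _) :=
    Sum.swap_leftInverse.injective
  have rename_pderiv (i : Fin (2 * n) ⊕ Fin (2 * n)) (q : MvPolynomial _ ℂ) :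
      rename Sum.swap (pderiv i q) = pderiv i.swap (rename Sum.swap q) :=
    (pderiv_rename hswap i q).symm
  rw [moyalStep_apply, moyalStep_apply, Finset.sum_comm]
  simp only [map_sum, map_smul, rename_pderiv, Sum.swap_inl, Sum.swap_inr, ← Finset.sum_neg_distrib,
    ← smul_neg]
  refine Finset.sum_congr rfl fun k _ => Finset.sum_congr rfl fun j _ => ?_
  have hπ : π k j = -π j k := by simpa using congrFun₂ hanti j k
  rw [hπ, neg_smul_neg, pderiv_pderiv_comm]

theorem moyalStep_scaleVars_sumElim_one_neg_one
    (p : MvPolynomial (Fin (2 * n) ⊕ Fin (2 * n)) ℂ) :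
    moyalStep n π (scaleVars (Sum.elim 1 (-1)) p)
      = -scaleVars (Sum.elim 1 (-1)) (moyalStep n π p) := by
  rw [moyalStep_apply, moyalStep_apply]
  simp only [map_sum, map_smul, pderiv_scaleVars, Derivation.map_smul, Sum.elim_inl, Sum.elim_inr,
    ← Finset.sum_neg_distrib, smul_smul, ← neg_smul]
  simp

theorem moyalStep_tensorTwist (hanti : π.transpose = -π)
    (p : MvPolynomial (Fin (2 * n) ⊕ Fin (2 * n)) ℂ) :
    moyalStep n π (tensorTwist p) = tensorTwist (moyalStep n π p) := by
  rw [tensorTwist, AlgHom.comp_apply, moyalStep_rename_swap π hanti,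
    moyalStep_scaleVars_sumElim_one_neg_one, map_neg, neg_neg, AlgHom.comp_apply]

theorem constantCoeff_moyalStep_pow_twist (hanti : π.transpose = -π) (m : ℕ)
    (a b : MvPolynomial (Fin (2 * n)) ℂ) :
    constantCoeff ((moyalStep n π ^ m) (rename Sum.inl (parityMap n b) * rename Sum.inr a))
      = constantCoeff ((moyalStep n π ^ m) (rename Sum.inl a * rename Sum.inr b)) := by
  have hcomm : Commute (moyalStep n π) tensorTwist.toLinearMap :=
    LinearMap.ext (moyalStep_tensorTwist π hanti)
  rw [parityMap_eq_scaleVars, ← tensorTwist_rename_inl_mul_rename_inr]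
  have key := LinearMap.congr_fun (hcomm.pow_left m).eq (rename Sum.inl a * rename Sum.inr b)
  simp only [Module.End.mul_apply, AlgHom.toLinearMap_apply] at key
  rw [key, constantCoeff_tensorTwist]

theorem isWeightedHomogeneous_moyalStep {p : MvPolynomial (Fin (2 * n) ⊕ Fin (2 * n)) ℂ}
    {d : ℤ} (h : p.IsWeightedHomogeneous (leftWeight (Fin (2 * n))) d) :
    (moyalStep n π p).IsWeightedHomogeneous (leftWeight (Fin (2 * n))) (d - 1) := by
  rw [moyalStep_apply]
  refine IsWeightedHomogeneous.sum _ _ _ fun j _ => IsWeightedHomogeneous.sum _ _ _ fun k _ => ?_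
  rw [smul_eq_C_mul]
  exact ((h.pderiv (add_zero d)).pderiv (sub_add_cancel d 1)).C_mul _

theorem isWeightedHomogeneous_moyalStep_pow {p : MvPolynomial (Fin (2 * n) ⊕ Fin (2 * n)) ℂ}
    {d : ℤ} (h : p.IsWeightedHomogeneous (leftWeight (Fin (2 * n))) d) (m : ℕ) :
    ((moyalStep n π ^ m) p).IsWeightedHomogeneous (leftWeight (Fin (2 * n))) (d - m) := by
  induction m with
  | zero => simpa using h
  | succ m ih =>
    rw [pow_succ', Module.End.mul_apply, Nat.cast_succ, ← sub_sub]
    exact isWeightedHomogeneous_moyalStep π ih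

theorem constantCoeff_moyalStep_pow_eq_zero {a : MvPolynomial (Fin (2 * n)) ℂ}
    (b : MvPolynomial (Fin (2 * n)) ℂ) {m : ℕ} (hm : a.totalDegree < m) :
    constantCoeff ((moyalStep n π ^ m) (rename Sum.inl a * rename Sum.inr b)) = 0 := by
  rw [← a.support_sum_monomial_coeff, map_sum, Finset.sum_mul, map_sum, map_sum]
  refine Finset.sum_eq_zero fun s hs => ?_
  have hleft : (monomial s (coeff s a)).IsWeightedHomogeneous
      (leftWeight (Fin (2 * n)) ∘ Sum.inl) (s.degree : ℤ) :=
    isWeightedHomogeneous_monomial _ _ _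
      (by simp [leftWeight, Finsupp.weight_apply, Finsupp.degree_apply, Finsupp.sum])
  have hright : b.IsWeightedHomogeneous (leftWeight (Fin (2 * n)) ∘ Sum.inr) 0 :=
    fun t _ => by simp [leftWeight, Finsupp.weight_apply]
  have hdeg : s.degree ≤ a.totalDegree := le_totalDegree hs
  have hprod := (hleft.rename Sum.inl).mul (hright.rename Sum.inr)
  rw [constantCoeff_eq]
  refine (isWeightedHomogeneous_moyalStep_pow π hprod m).coeff_eq_zero 0 ?_
  rw [map_zero]
  omega

theorem constantCoeff_moyal {a : MvPolynomial (Fin (2 * n)) ℂ}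
    (b : MvPolynomial (Fin (2 * n)) ℂ) {N : ℕ} (hN : a.totalDegree < N) :
    constantCoeff (moyal n π a b) = ∑ m ∈ Finset.range N, Complex.I ^ m / m.factorial *
      constantCoeff ((moyalStep n π ^ m) (rename Sum.inl a * rename Sum.inr b)) := by
  simp only [moyal, map_sum, constantCoeff_smul, constantCoeff_rename, smul_eq_mul]
  refine Finset.sum_subset (Finset.range_subset_range.mpr hN) fun m _ hm => ?_
  rw [constantCoeff_moyalStep_pow_eq_zero π b (by simpa using hm), mul_zero]

end Moyal

theorem bilinear_form_twist_symmetry (π : Matrix (Fin (2 * n)) (Fin (2 * n)) ℂ)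
    (hanti : π.transpose = -π)
    (a b : MvPolynomial (Fin (2 * n)) ℂ) :
    constantCoeff (moyal n π a b) = constantCoeff (moyal n π (parityMap n b) a) := by
  set N := max a.totalDegree (parityMap n b).totalDegree + 1
  rw [constantCoeff_moyal π b (N := N) (by omega), constantCoeff_moyal π a (N := N) (by omega)]
  simp_rw [constantCoeff_moyalStep_pow_twist π hanti]
end

section
/- In the Weyl algebra with twisted right module structure, the general solution of the system of equations y^j * α + α * y^j = 0 (for all j), equivalently 2y^j α + i π^{jk} ∂α/∂z^k = 0, in formal power series α(y,z) is α = e^{2iω(z,y)} g(y), where ω is the form dual to π and g is an arbitrary formal series in y. -/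
/-! The Weyl algebra with a twisted right module structure: formal power
series `α(y,z)` in variables `y^1,…,y^{2n}` (indexed by `Sum.inl`) and
`z^1,…,z^{2n}` (indexed by `Sum.inr`). -/

/-- Formal power series in the `y` and `z` variables. -/
abbrev FSeries (n : ℕ) := MvPowerSeries (Fin (2 * n) ⊕ Fin (2 * n)) ℂ

/-- Partial derivative `∂/∂z^k` on formal power series. -/
noncomputable def pdz {n : ℕ} (k : Fin (2 * n)) (f : FSeries n) : FSeries n :=
  fun e => ((e (Sum.inr k) : ℂ) + 1) * f (e + Finsupp.single (Sum.inr k) 1)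

/-- Multiplication by `y^j` on formal power series. -/
noncomputable def muly {n : ℕ} (j : Fin (2 * n)) (f : FSeries n) : FSeries n :=
  fun e => if 1 ≤ e (Sum.inl j) then f (e - Finsupp.single (Sum.inl j) 1) else 0

/-- The quadratic form `ω(z,y) = ω_{jk} z^j y^k` as a formal power series. -/
noncomputable def omegaZY (n : ℕ) (ω : Matrix (Fin (2 * n)) (Fin (2 * n)) ℂ) :
    FSeries n :=
  ∑ j : Fin (2 * n), ∑ k : Fin (2 * n),
    ω j k • MvPowerSeries.monomial
      (Finsupp.single (Sum.inr j) 1 + Finsupp.single (Sum.inl k) 1) 1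

/-- Total degree in the `z` variables of a monomial. -/
def zdeg {n : ℕ} (e : (Fin (2 * n) ⊕ Fin (2 * n)) →₀ ℕ) : ℕ :=
  ∑ j : Fin (2 * n), e (Sum.inr j)

/-- The exponential `e^{2iω(z,y)}`, defined coefficientwise: a monomial of
`z`-degree `m` only receives a contribution from the `m`-th term of the
exponential series. -/
noncomputable def expOmega (n : ℕ) (ω : Matrix (Fin (2 * n)) (Fin (2 * n)) ℂ) :
    FSeries n :=
  fun e => ((2 * Complex.I) ^ zdeg e / ((zdeg e).factorial : ℂ)) *
    MvPowerSeries.coeff e ((omegaZY n ω) ^ zdeg e)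

open scoped Classical in
/-- A power series in `y` alone, viewed as an element of `FSeries n`. -/
noncomputable def embY {n : ℕ} (g : MvPowerSeries (Fin (2 * n)) ℂ) : FSeries n :=
  fun e => if ∀ j, e (Sum.inr j) = 0
    then g (Finsupp.comapDomain Sum.inl e Sum.inl_injective.injOn) else 0

/-! Contracting the system with `ω` turns it into `∂α/∂z^l = 2i (∂ω(z,y)/∂z^l) α`.
The series `E = e^{2iω(z,y)}` solves this system and is invertible, so by the Leibniz rule
`α = E β` solves it iff every `∂/∂z^l` kills `β`, i.e. iff `β` is a series in `y` alone. -/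

theorem Matrix.sum_smul_sum_smul {ι K M : Type*} [Fintype ι] [CommSemiring K] [AddCommMonoid M]
    [Module K M] (A B : Matrix ι ι K) (v : ι → M) (i : ι) :
    ∑ k, A i k • ∑ m, B k m • v m = ∑ m, (A * B) i m • v m := by
  simp only [Finset.smul_sum, smul_smul, Matrix.mul_apply, Finset.sum_smul]
  exact Finset.sum_comm

theorem Matrix.forall_sum_smul_eq_iff_of_mul_eq_one {ι K M : Type*} [Fintype ι] [DecidableEq ι]
    [CommRing K] [AddCommMonoid M] [Module K M] {A B : Matrix ι ι K} (h : A * B = 1)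
    (v u : ι → M) :
    (∀ i, ∑ k, A i k • v k = u i) ↔ ∀ i, v i = ∑ k, B i k • u k := by
  have sum_one_smul (w : ι → M) (i : ι) : ∑ k, (1 : Matrix ι ι K) i k • w k = w i := by
    simp [Matrix.one_apply, ite_smul]
  constructor
  · intro hu i
    simp only [← hu, Matrix.sum_smul_sum_smul, mul_eq_one_comm.mp h, sum_one_smul]
  · intro hv i
    simp only [hv, Matrix.sum_smul_sum_smul, h, sum_one_smul]

theorem Derivation.apply_unit_mul_eq_mul_iff {R A : Type*} [CommSemiring R] [CommRing A]
    [Algebra R A] (D : Derivation R A A) {E a : A} (hE : IsUnit E) (hDE : D E = a * E) (y : A) :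
    D (E * y) = a * (E * y) ↔ D y = 0 := by
  rw [D.leibniz, hDE, smul_eq_mul, smul_eq_mul, ← hE.mul_right_eq_zero]
  constructor <;> intro h <;> linear_combination h

theorem MvPowerSeries.coeff_eq_zero_of_pderiv_eq_zero {σ R : Type*} [CommSemiring R]
    [IsAddTorsionFree R] {i : σ} {f : MvPowerSeries σ R} (hf : pderiv R i f = 0)
    {e : σ →₀ ℕ} (he : e i ≠ 0) : coeff e f = 0 := by
  classical
  have he' : 1 ≤ e i := Nat.one_le_iff_ne_zero.mpr he
  have h := congrArg (coeff (e - Finsupp.single i 1)) hf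
  rw [coeff_pderiv, tsub_add_cancel_of_le (Finsupp.single_le_iff.mpr he'), map_zero,
    Finsupp.tsub_apply, Finsupp.single_eq_same, ← Nat.cast_add_one, Nat.sub_add_cancel he',
    mul_comm, ← nsmul_eq_mul] at h
  exact (nsmul_eq_zero_iff_right he).mp h

theorem two_smul_add_I_smul_eq_zero_iff {M : Type*} [AddCommGroup M] [Module ℂ M] (w s : M) :
    (2 : ℂ) • w + Complex.I • s = 0 ↔ s = (2 * Complex.I) • w := by
  constructor <;> intro h
  · linear_combination (norm := module) (-Complex.I) • h + Complex.I_mul_I • s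
  · linear_combination (norm := module) Complex.I • h + Complex.I_mul_I • (2 : ℂ) • w

section TwistedWeyl

open MvPowerSeries

variable {n : ℕ}

theorem pdz_eq_pderiv (k : Fin (2 * n)) (f : FSeries n) :
    pdz k f = pderiv ℂ (Sum.inr k) f := by
  ext e
  rw [coeff_pderiv]
  exact mul_comm _ _

theorem muly_eq_X_mul (j : Fin (2 * n)) (f : FSeries n) :
    muly j f = X (Sum.inl j) * f := by
  ext e
  simp only [X_def, coeff_monomial_mul, Finsupp.single_le_iff, one_mul]
  rfl

theorem pderiv_inr_omegaZY (ω : Matrix (Fin (2 * n)) (Fin (2 * n)) ℂ) (l : Fin (2 * n)) :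
    pderiv ℂ (Sum.inr l) (omegaZY n ω) = ∑ k, ω l k • X (Sum.inl k) := by
  have monomial_eq_X_mul_X (a b : Fin (2 * n) ⊕ Fin (2 * n)) :
      monomial (Finsupp.single a 1 + Finsupp.single b 1) (1 : ℂ) = X a * X b := by
    rw [X_def, X_def, monomial_mul_monomial, one_mul]
  simp [omegaZY, monomial_eq_X_mul_X, pderiv_X, Pi.single_apply]

theorem twisted_equation_iff {π ω : Matrix (Fin (2 * n)) (Fin (2 * n)) ℂ} (hdual : π * ω = 1)
    (α : FSeries n) :
    (∀ j, (2 : ℂ) • muly j α + Complex.I • ∑ k, π j k • pdz k α = 0) ↔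
      ∀ l, pderiv ℂ (Sum.inr l) α =
        (2 * Complex.I) • pderiv ℂ (Sum.inr l) (omegaZY n ω) * α := by
  simp only [pdz_eq_pderiv, muly_eq_X_mul, two_smul_add_I_smul_eq_zero_iff]
  refine (Matrix.forall_sum_smul_eq_iff_of_mul_eq_one hdual _ _).trans (forall_congr' fun l => ?_)
  simp only [pderiv_inr_omegaZY, Finset.smul_sum, Finset.sum_mul, smul_mul_assoc,
    smul_comm (2 * Complex.I)]

theorem pderiv_inr_embY (l : Fin (2 * n)) (g : MvPowerSeries (Fin (2 * n)) ℂ) :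
    pderiv ℂ (Sum.inr l) (embY g) = 0 := by
  ext e
  rw [coeff_pderiv, map_zero]
  exact mul_eq_zero_of_left (if_neg fun h => by simpa using h l) _

theorem forall_pderiv_inr_eq_zero_iff (f : FSeries n) :
    (∀ l, pderiv ℂ (Sum.inr l) f = 0) ↔ ∃ g, f = embY g := by
  refine ⟨fun hf => ⟨fun d => coeff (Finsupp.embDomain .inl d) f, ?_⟩,
    fun ⟨g, hg⟩ l => hg ▸ pderiv_inr_embY l g⟩
  ext e
  by_cases he : ∀ j, e (Sum.inr j) = 0
  · have hsupp : (e.support : Set (Fin (2 * n) ⊕ Fin (2 * n))) ⊆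
        Set.range Function.Embedding.inl := by
      rintro (a | j) hj
      · exact ⟨a, rfl⟩
      · exact absurd (he j) (Finsupp.mem_support_iff.mp hj)
    calc coeff e f = coeff (Finsupp.embDomain .inl (Finsupp.comapDomain Sum.inl e _)) f :=
          congrArg (coeff · f) (Finsupp.embDomain_comapDomain hsupp).symm
      _ = coeff e (embY _) := (if_pos he).symm
  · push Not at he
    obtain ⟨l, hl⟩ := he
    rw [coeff_eq_zero_of_pderiv_eq_zero (hf l) hl]
    exact (if_neg fun h => hl (h l)).symm

theorem zdeg_add_single_inr (e : Fin (2 * n) ⊕ Fin (2 * n) →₀ ℕ) (l : Fin (2 * n)) :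
    zdeg (e + Finsupp.single (Sum.inr l) 1) = zdeg e + 1 := by
  simp [zdeg, Finset.sum_add_distrib, Finsupp.single_apply]

theorem zdeg_sub_single_inl (e : Fin (2 * n) ⊕ Fin (2 * n) →₀ ℕ) (k : Fin (2 * n)) :
    zdeg (e - Finsupp.single (Sum.inl k) 1) = zdeg e := by
  simp [zdeg]

theorem isUnit_expOmega (ω : Matrix (Fin (2 * n)) (Fin (2 * n)) ℂ) : IsUnit (expOmega n ω) := by
  have hzdeg : zdeg (0 : Fin (2 * n) ⊕ Fin (2 * n) →₀ ℕ) = 0 := by simp [zdeg]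
  rw [isUnit_iff_constantCoeff, ← coeff_zero_eq_constantCoeff_apply]
  change IsUnit ((2 * Complex.I) ^ zdeg 0 / (zdeg 0).factorial * coeff 0 (omegaZY n ω ^ zdeg 0))
  simp [hzdeg]

theorem coeff_X_inl_mul_expOmega (ω : Matrix (Fin (2 * n)) (Fin (2 * n)) ℂ) (k : Fin (2 * n))
    (e : Fin (2 * n) ⊕ Fin (2 * n) →₀ ℕ) :
    coeff e (X (Sum.inl k) * expOmega n ω) = (2 * Complex.I) ^ zdeg e / (zdeg e).factorial *
      coeff e (X (Sum.inl k) * omegaZY n ω ^ zdeg e) := by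
  rw [X_def, coeff_monomial_mul, coeff_monomial_mul]
  split_ifs
  · rw [one_mul, one_mul, ← zdeg_sub_single_inl e k]
    rfl
  · rw [mul_zero]

/-- Coefficientwise at `e`, both sides only see the terms of the exponential series of degrees
`zdeg e + 1` and `zdeg e`, since `∂/∂z^l` lowers the `z`-degree by one and multiplication by
`y^k` preserves it. -/
theorem pderiv_inr_expOmega (ω : Matrix (Fin (2 * n)) (Fin (2 * n)) ℂ) (l : Fin (2 * n)) :
    pderiv ℂ (Sum.inr l) (expOmega n ω) =
      (2 * Complex.I) • pderiv ℂ (Sum.inr l) (omegaZY n ω) * expOmega n ω := by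
  ext e
  set m := zdeg e
  set Ω := omegaZY n ω
  have lhs : coeff e (pderiv ℂ (Sum.inr l) (expOmega n ω)) = (2 * Complex.I) ^ (m + 1) /
      (m + 1).factorial * ((m + 1) * coeff e (Ω ^ m * pderiv ℂ (Sum.inr l) Ω)) := by
    rw [coeff_pderiv]
    change (2 * Complex.I) ^ zdeg _ / (zdeg _).factorial * coeff _ (Ω ^ zdeg _) * _ = _
    rw [zdeg_add_single_inr, mul_assoc, ← coeff_pderiv, Derivation.leibniz_pow, map_nsmul,
      smul_eq_mul, nsmul_eq_mul, Nat.add_sub_cancel]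
    push_cast
    rfl
  have rhs : coeff e ((2 * Complex.I) • pderiv ℂ (Sum.inr l) Ω * expOmega n ω) =
      2 * Complex.I * ((2 * Complex.I) ^ m / m.factorial *
        coeff e (pderiv ℂ (Sum.inr l) Ω * Ω ^ m)) := by
    simp only [Ω, pderiv_inr_omegaZY, smul_mul_assoc, Finset.sum_mul, map_smul, map_sum,
      coeff_X_inl_mul_expOmega, smul_eq_mul, Finset.mul_sum]
    exact Finset.sum_congr rfl fun k _ => by rw [mul_left_comm (ω l k)]
  rw [lhs, rhs, mul_comm (Ω ^ m), Nat.factorial_succ]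
  push_cast
  field_simp
  ring

end TwistedWeyl

theorem twisted_invariants_solution_general (n : ℕ)
    (π ω : Matrix (Fin (2 * n)) (Fin (2 * n)) ℂ)
    (hdual : π * ω = 1)
    (α : FSeries n) :
    (∀ j : Fin (2 * n),
        (2 : ℂ) • muly j α + Complex.I • ∑ k : Fin (2 * n), π j k • pdz k α = 0)
      ↔ ∃ g : MvPowerSeries (Fin (2 * n)) ℂ, α = expOmega n ω * embY g := by
  have hE := isUnit_expOmega ω
  obtain ⟨β, rfl⟩ : ∃ β, α = expOmega n ω * β := ⟨_, (hE.unit.mul_inv_cancel_left α).symm⟩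
  calc _ ↔ ∀ l, MvPowerSeries.pderiv ℂ (Sum.inr l) (expOmega n ω * β) =
        (2 * Complex.I) • MvPowerSeries.pderiv ℂ (Sum.inr l) (omegaZY n ω) *
          (expOmega n ω * β) := twisted_equation_iff hdual _
    _ ↔ ∀ l, MvPowerSeries.pderiv ℂ (Sum.inr l) β = 0 := forall_congr' fun l =>
        (MvPowerSeries.pderiv ℂ _).apply_unit_mul_eq_mul_iff hE (pderiv_inr_expOmega ω l) β
    _ ↔ ∃ g, β = embY g := forall_pderiv_inr_eq_zero_iff β
    _ ↔ ∃ g, expOmega n ω * β = expOmega n ω * embY g :=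
        exists_congr fun g => hE.mul_right_inj.symm

/-- in the Weyl algebra with twisted right module structure, the
general solution of `y^j ∗ α + α ∗ y^j = 0` (for all `j`), equivalently
`2 y^j α + i π^{jk} ∂α/∂z^k = 0`, in formal power series `α(y,z)` is exactly
`α = e^{2iω(z,y)} g(y)` with `g` an arbitrary formal power series in `y`,
where `ω` is the two-form dual to `π`. -/
theorem twisted_invariants_solution (n : ℕ)
    (π ω : Matrix (Fin (2 * n)) (Fin (2 * n)) ℂ)
    (hanti : π.transpose = -π) (hdual : π * ω = 1)
    (α : FSeries n) :
    (∀ j : Fin (2 * n),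
        (2 : ℂ) • muly j α + Complex.I • ∑ k : Fin (2 * n), π j k • pdz k α = 0)
      ↔ ∃ g : MvPowerSeries (Fin (2 * n)) ℂ, α = expOmega n ω * embY g :=
  twisted_invariants_solution_general n π ω hdual α
end

section
/- Let Δ(v_0,...,v_{2n}) ∈ {0, ±1} be the signed characteristic function of the oriented simplex spanned by v_0,...,v_{2n} ∈ R^{2n} (value ±1 according to orientation if the origin lies in the interior of the simplex, 0 if the origin is outside). Then for any 2n+2 points v_0,...,v_{2n+1} in general position in R^{2n}, Σ_{k=0}^{2n+1} (−1)^k Δ(v_0,...,v̂_k,...,v_{2n+1}) = 0; i.e. Δ is an Alexander–Spanier 2n-cocycle. -/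
open Set
open scoped Classical

/-- The signed characteristic function `Δ(v_0,…,v_{2n})` of the oriented
simplex spanned by `v_0,…,v_{2n} ⊂ ℝ^{2n}`: it is `±1` (the sign of
`det(v_1 - v_0, …, v_{2n} - v_0)`) if the origin lies in the interior of the
convex hull of the points, and `0` otherwise. -/
noncomputable def simplexChar (n : ℕ) (v : Fin (2 * n + 1) → (Fin (2 * n) → ℝ)) : ℤ :=
  if (0 : Fin (2 * n) → ℝ) ∈ interior (convexHull ℝ (Set.range v)) then
    (if 0 < Matrix.det (Matrix.of fun i j : Fin (2 * n) => v i.succ j - v 0 j)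
      then 1 else -1)
  else 0

/-!
Append a coordinate `1` to the points `v_0, …, v_{2n+1}`. The signed maximal minors
`c_k = (-1)^k det(v_i, 1)_{i ≠ k}` of the resulting matrix form an affine relation
`∑ c_k = 0`, `∑ c_k v_k = 0`, and `c_k` has the sign of the `k`-th term of the sum whenever that
term is nonzero. Since every facet is affinely independent, `c` spans all affine relations, so
the weight vectors `ν` with `∑ ν_k = 1`, `∑ ν_k v_k = 0` form a line `μ + t c`, and `0` is interior
to the facet opposite `v_k` exactly when this line meets the facet `{ν_k = 0}` of the positive
orthant in its relative interior. General position forbids the line to meet two facets at once,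
so the segment of the line in the orthant is either empty or enters through a single facet
(where `c_k > 0`) and leaves through a single facet (where `c_k < 0`): the nonzero terms cancel.
-/

open Finset Matrix

section Homogenization

variable {R : Type*} [CommRing R]

theorem Matrix.vecMul_alternatingMinors_eq_zero {m : ℕ}
    (W : Matrix (Fin (m + 2)) (Fin (m + 1)) R) :
    (fun k : Fin (m + 2) => (-1) ^ (k : ℕ) * (W.submatrix k.succAbove id).det) ᵥ* W = 0 := by
  ext j
  -- Laplace expansion along the last column of `W` with its column `j` appended
  set B : Matrix (Fin (m + 2)) (Fin (m + 2)) R := of fun i => Fin.snoc (W i) (W i j)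
  have hB : B.det = 0 :=
    det_zero_of_column_eq (Fin.castSucc_lt_last j).ne fun k => by simp [B]
  rw [det_succ_column B (Fin.last (m + 1))] at hB
  have hminor : ∀ k : Fin (m + 2),
      B.submatrix k.succAbove (Fin.last (m + 1)).succAbove = W.submatrix k.succAbove id := by
    intro k; ext a b; simp [B]
  simp only [hminor, Fin.val_last, B, of_apply, Fin.snoc_last] at hB
  rw [Pi.zero_apply, ← (isUnit_neg_one.pow (m + 1)).mul_right_eq_zero, ← hB, vecMul, dotProduct,
    mul_sum]
  exact sum_congr rfl fun k _ => by ring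

theorem Matrix.det_of_snoc_one {m : ℕ} (u : Fin (m + 1) → Fin m → R) :
    (of fun i => Fin.snoc (u i) (1 : R)).det =
      (-1) ^ m * (of fun i j : Fin m => u i.succ j - u 0 j).det := by
  -- subtract the first row from the others; the last column becomes the first unit vector
  set B : Matrix (Fin (m + 1)) (Fin (m + 1)) R :=
    of (Fin.cons (Fin.snoc (u 0) 1) fun i => Fin.snoc (u i.succ - u 0) 0)
  have hrow : (of fun i => Fin.snoc (u i) (1 : R)).det = B.det := by
    refine det_eq_of_forall_row_eq_smul_add_const (Fin.cons 0 fun _ => 1) 0 rfl fun i j => ?_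
    refine Fin.cases ?_ (fun i => ?_) i <;> refine Fin.lastCases ?_ (fun j => ?_) j <;> simp [B]
  rw [hrow, det_succ_column B (Fin.last m), Finset.sum_eq_single 0]
  · congr 1
    · simp [B]
    · congr 1; ext i j; simp [B]
  · intro i _ hi
    obtain ⟨i, rfl⟩ := Fin.exists_succ_eq.2 hi
    simp [B]
  · simp

theorem Matrix.vecMul_of_snoc_one_eq_zero_iff {ι : Type*} [Fintype ι] {m : ℕ}
    (u : ι → Fin m → R) (w : ι → R) :
    w ᵥ* (of fun i => Fin.snoc (u i) (1 : R)) = 0 ↔ ∑ i, w i • u i = 0 ∧ ∑ i, w i = 0 := by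
  have hvec : w ᵥ* (of fun i => Fin.snoc (u i) (1 : R)) =
      Fin.snoc (∑ i, w i • u i) (∑ i, w i) := by
    ext j
    refine Fin.lastCases ?_ (fun j => ?_) j <;>
      simp [vecMul, dotProduct, Finset.sum_apply, mul_comm]
  rw [hvec]
  constructor
  · intro h
    exact ⟨funext fun j => by simpa using congrFun h j.castSucc,
      by simpa using congrFun h (Fin.last m)⟩
  · rintro ⟨hu, h1⟩
    ext j
    refine Fin.lastCases ?_ (fun j => ?_) j <;> simp [hu, h1]

theorem AffineIndependent.det_of_snoc_one_ne_zero {K : Type*} [Field K] {m : ℕ}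
    {u : Fin (m + 1) → Fin m → K} (hu : AffineIndependent K u) :
    (of fun i => Fin.snoc (u i) (1 : K)).det ≠ 0 := by
  intro h
  obtain ⟨w, hw, hw0⟩ := exists_vecMul_eq_zero_iff.2 h
  obtain ⟨hwu, hw1⟩ := (vecMul_of_snoc_one_eq_zero_iff u w).1 hw0
  exact hw (funext fun i => hu.eq_zero_of_sum_eq_zero hw1 hwu i (Finset.mem_univ i))

variable {m : ℕ}

def signedFacetDet (v : Fin (m + 2) → Fin m → R) (k : Fin (m + 2)) : R :=
  (-1) ^ (k : ℕ) * (of fun i => Fin.snoc (v (k.succAbove i)) (1 : R)).det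

theorem sum_signedFacetDet_smul_eq_zero_and_sum_eq_zero (v : Fin (m + 2) → Fin m → R) :
    ∑ k, signedFacetDet v k • v k = 0 ∧ ∑ k, signedFacetDet v k = 0 :=
  (vecMul_of_snoc_one_eq_zero_iff v _).1
    (vecMul_alternatingMinors_eq_zero (of fun k => Fin.snoc (v k) (1 : R)))

theorem signedFacetDet_ne_zero {K : Type*} [Field K] {v : Fin (m + 2) → Fin m → K}
    {k : Fin (m + 2)} (hk : AffineIndependent K fun i => v (k.succAbove i)) :
    signedFacetDet v k ≠ 0 :=
  mul_ne_zero (pow_ne_zero _ (neg_ne_zero.2 one_ne_zero)) hk.det_of_snoc_one_ne_zero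

end Homogenization

section LineInOrthant

variable {ι : Type*} (μ c : ι → ℝ)

/-- The line `t ↦ μ + t • c` meets the facet `{x | x k = 0}` of the closed positive orthant
in its relative interior. -/
def LineMeetsFacet (k : ι) : Prop :=
  ∃ t : ℝ, μ k + t * c k = 0 ∧ ∀ i ≠ k, 0 < μ i + t * c i

/-- The line `t ↦ μ + t • c` meets no face of codimension two of the closed positive orthant. -/
def LineAvoidsRidges : Prop :=
  ∀ t : ℝ, (∀ l, 0 ≤ μ l + t * c l) → ∀ i j, μ i + t * c i = 0 → μ j + t * c j = 0 → i = j

variable {μ c}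

theorem LineAvoidsRidges.neg (h : LineAvoidsRidges μ c) : LineAvoidsRidges μ (-c) :=
  fun t hnonneg i j hi hj =>
    h (-t) (fun l => by simpa using hnonneg l) i j (by simpa using hi) (by simpa using hj)

theorem lineMeetsFacet_neg_iff {k : ι} : LineMeetsFacet μ (-c) k ↔ LineMeetsFacet μ c k := by
  constructor <;> rintro ⟨t, hk, hpos⟩ <;>
    exact ⟨-t, by simpa using hk, fun i hi => by simpa using hpos i hi⟩

theorem LineMeetsFacet.eq_of_pos {k k' : ι} (hk : LineMeetsFacet μ c k)
    (hk' : LineMeetsFacet μ c k') (hck : 0 < c k) (hck' : 0 < c k') : k = k' := by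
  obtain ⟨t, hkt, hpos⟩ := hk
  obtain ⟨t', hkt', hpos'⟩ := hk'
  by_contra hne
  have h₁ := hpos k' (Ne.symm hne)
  have h₂ := hpos' k hne
  rcases lt_or_ge t t' with h | h <;> nlinarith

theorem LineMeetsFacet.exists_neg [Fintype ι] (hsum : ∑ i, c i = 0) (hsep : LineAvoidsRidges μ c)
    {k : ι} (hk : LineMeetsFacet μ c k) (hck : 0 < c k) :
    ∃ k', LineMeetsFacet μ c k' ∧ c k' < 0 := by
  obtain ⟨t₀, hkt₀, hpos₀⟩ := hk
  have hneg : ({i | c i < 0} : Finset ι).Nonempty := by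
    by_contra h
    simp only [filter_nonempty_iff, Finset.mem_univ, true_and, not_exists, not_lt] at h
    exact (sum_pos' (fun i _ => h i) ⟨k, Finset.mem_univ k, hck⟩).ne' hsum
  -- the line leaves the orthant where the first coordinate with negative slope vanishes
  obtain ⟨k', hk'neg, hmin⟩ := exists_min_image _ (fun i => -μ i / c i) hneg
  simp only [mem_filter, Finset.mem_univ, true_and] at hk'neg hmin
  set s := -μ k' / c k'
  have hk's : μ k' + s * c k' = 0 := by
    rw [div_mul_cancel₀ _ hk'neg.ne]; ring
  have hnonneg : ∀ l, 0 ≤ μ l + s * c l := by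
    intro l
    rcases lt_or_ge (c l) 0 with hl | hl
    · have := (le_div_iff_of_neg hl).1 (hmin l hl)
      linarith
    · have h₀ : 0 ≤ μ l + t₀ * c l := by
        by_cases hlk : l = k
        · rw [hlk, hkt₀]
        · exact (hpos₀ l hlk).le
      have hk'₀ := hpos₀ k' (by rintro rfl; linarith)
      have ht₀s : t₀ ≤ s := by nlinarith
      nlinarith
  exact ⟨k', ⟨s, hk's, fun i hi =>
    (hnonneg i).lt_of_ne fun h => hi (hsep s hnonneg i k' h.symm hk's)⟩, hk'neg⟩

theorem sum_sign_lineMeetsFacet_eq_zero [Fintype ι] (hc : ∀ i, c i ≠ 0) (hsum : ∑ i, c i = 0)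
    (hsep : LineAvoidsRidges μ c) :
    ∑ k, (if LineMeetsFacet μ c k then (if 0 < c k then 1 else -1) else 0 : ℤ) = 0 := by
  set P : Finset ι := {k | LineMeetsFacet μ c k ∧ 0 < c k}
  set N : Finset ι := {k | LineMeetsFacet μ c k ∧ c k < 0}
  have hP : #P ≤ 1 := card_le_one.2 fun a ha b hb => by
    simp only [P, mem_filter, Finset.mem_univ, true_and] at ha hb
    exact ha.1.eq_of_pos hb.1 ha.2 hb.2
  have hN : #N ≤ 1 := card_le_one.2 fun a ha b hb => by
    simp only [N, mem_filter, Finset.mem_univ, true_and] at ha hb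
    exact (lineMeetsFacet_neg_iff.2 ha.1).eq_of_pos (lineMeetsFacet_neg_iff.2 hb.1)
      (neg_pos.2 ha.2) (neg_pos.2 hb.2)
  have hPN : P.Nonempty ↔ N.Nonempty := by
    simp only [P, N, filter_nonempty_iff, Finset.mem_univ, true_and]
    constructor
    · rintro ⟨k, hk, hck⟩
      exact hk.exists_neg hsum hsep hck
    · rintro ⟨k, hk, hck⟩
      obtain ⟨k', hk', hk'neg⟩ := (lineMeetsFacet_neg_iff.2 hk).exists_neg (by simp [hsum]) hsep.neg
        (neg_pos.2 hck)
      exact ⟨k', lineMeetsFacet_neg_iff.1 hk', by simpa using hk'neg⟩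
  have hcard : ∑ k, (if LineMeetsFacet μ c k then (if 0 < c k then 1 else -1) else 0 : ℤ) =
      #P - #N := by
    simp only [P, N, card_filter, Nat.cast_sum, Nat.cast_ite, Nat.cast_one, Nat.cast_zero,
      ← sum_sub_distrib]
    refine sum_congr rfl fun k _ => ?_
    rcases (hc k).lt_or_gt with h | h <;> by_cases hk : LineMeetsFacet μ c k <;>
      simp [h, h.not_gt, hk]
  rw [hcard, sub_eq_zero, Nat.cast_inj]
  rw [← card_pos, ← card_pos] at hPN
  omega

end LineInOrthant

section AffineWeights

theorem sum_smul_mem_convexHull_image {ι V : Type*} [Fintype ι] [AddCommGroup V] [Module ℝ V]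
    {v : ι → V} {ν : ι → ℝ} {s : Finset ι} (hν : ∀ i, 0 ≤ ν i) (hsum : ∑ i, ν i = 1)
    (hs : ∀ i ∉ s, ν i = 0) : ∑ i, ν i • v i ∈ convexHull ℝ (v '' s) := by
  rw [← sum_subset (subset_univ s) fun i _ hi => by simp [hs i hi]]
  rw [← sum_subset (subset_univ s) fun i _ hi => hs i hi] at hsum
  exact (convex_convexHull ℝ _).sum_mem (fun i _ => hν i) hsum
    fun i hi => subset_convexHull ℝ _ (mem_image_of_mem v hi)

variable {V : Type*} [AddCommGroup V] [Module ℝ V]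

theorem eq_of_apply_eq_zero_of_forall_notMem_convexHull {m : ℕ} {v : Fin (m + 2) → V} {x : V}
    (havoid : ∀ s : Finset (Fin (m + 2)), #s ≤ m → x ∉ convexHull ℝ (v '' s))
    {ν : Fin (m + 2) → ℝ} (hν : ∀ l, 0 ≤ ν l) (hsum : ∑ l, ν l = 1) (hv : ∑ l, ν l • v l = x)
    {i j : Fin (m + 2)} (hi : ν i = 0) (hj : ν j = 0) : i = j := by
  by_contra hij
  refine havoid ((univ.erase i).erase j) (by simp [card_erase_of_mem, Ne.symm hij]) ?_
  rw [← hv]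
  refine sum_smul_mem_convexHull_image hν hsum fun l hl => ?_
  obtain rfl | rfl : l = i ∨ l = j := by
    simp only [mem_erase, Finset.mem_univ, and_true, not_and, not_not] at hl
    tauto
  exacts [hi, hj]

variable {N : ℕ} {v : Fin (N + 1) → V}

theorem exists_sum_eq_one_and_sum_smul_eq {k : Fin (N + 1)}
    (hspan : affineSpan ℝ (range fun i => v (k.succAbove i)) = ⊤) (x : V) :
    ∃ μ : Fin (N + 1) → ℝ, ∑ i, μ i = 1 ∧ ∑ i, μ i • v i = x := by
  have hx : x ∈ affineSpan ℝ (range v) :=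
    affineSpan_mono ℝ (range_comp_subset_range _ _) (hspan ▸ AffineSubspace.mem_top ℝ V x)
  obtain ⟨μ, hμ, rfl⟩ := eq_affineCombination_of_mem_affineSpan_of_fintype hx
  exact ⟨μ, hμ, (Finset.univ.affineCombination_eq_linear_combination _ _ hμ).symm⟩

theorem exists_pos_weights_succAbove_iff (k : Fin (N + 1)) {x : V} :
    (∃ w : Fin N → ℝ, (∀ i, 0 < w i) ∧ ∑ i, w i = 1 ∧ ∑ i, w i • v (k.succAbove i) = x) ↔
      ∃ ν : Fin (N + 1) → ℝ, ν k = 0 ∧ (∀ i ≠ k, 0 < ν i) ∧ ∑ i, ν i = 1 ∧ ∑ i, ν i • v i = x := by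
  constructor
  · rintro ⟨w, hpos, hsum, hx⟩
    refine ⟨k.insertNth 0 w, by simp, fun i hi => ?_, ?_, ?_⟩
    · obtain ⟨i, rfl⟩ := Fin.exists_succAbove_eq hi
      simpa using hpos i
    · simpa [Fin.sum_univ_succAbove _ k] using hsum
    · simpa [Fin.sum_univ_succAbove _ k] using hx
  · rintro ⟨ν, hνk, hpos, hsum, hx⟩
    refine ⟨fun i => ν (k.succAbove i), fun i => hpos _ (Fin.succAbove_ne k i), ?_, ?_⟩
    · simpa [Fin.sum_univ_succAbove _ k, hνk] using hsum
    · simpa [Fin.sum_univ_succAbove _ k, hνk] using hx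

theorem AffineIndependent.eq_zero_of_succAbove {k : Fin (N + 1)}
    (hk : AffineIndependent ℝ fun i => v (k.succAbove i)) {e : Fin (N + 1) → ℝ}
    (hsum : ∑ i, e i = 0) (hv : ∑ i, e i • v i = 0) (hek : e k = 0) : e = 0 := by
  rw [Fin.sum_univ_succAbove _ k, hek, zero_add] at hsum
  rw [Fin.sum_univ_succAbove _ k, hek, zero_smul, zero_add] at hv
  funext i
  induction i using Fin.succAboveCases k with
  | x => exact hek
  | p i => exact hk.eq_zero_of_sum_eq_zero hsum hv i (Finset.mem_univ i)

variable {c μ : Fin (N + 1) → ℝ} {x : V}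

theorem sum_add_smul_eq_one_and_sum_smul_eq (hcsum : ∑ i, c i = 0) (hcv : ∑ i, c i • v i = 0)
    (hμsum : ∑ i, μ i = 1) (hμv : ∑ i, μ i • v i = x) (t : ℝ) :
    ∑ i, (μ + t • c) i = 1 ∧ ∑ i, (μ + t • c) i • v i = x := by
  simp [sum_add_distrib, add_smul, ← mul_sum, mul_smul, ← smul_sum, hμsum, hμv, hcsum, hcv]

theorem sum_eq_one_and_sum_smul_eq_iff {k : Fin (N + 1)}
    (hk : AffineIndependent ℝ fun i => v (k.succAbove i)) (hck : c k ≠ 0)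
    (hcsum : ∑ i, c i = 0) (hcv : ∑ i, c i • v i = 0) (hμsum : ∑ i, μ i = 1)
    (hμv : ∑ i, μ i • v i = x) (ν : Fin (N + 1) → ℝ) :
    (∑ i, ν i = 1 ∧ ∑ i, ν i • v i = x) ↔ ∃ t : ℝ, ν = μ + t • c := by
  constructor
  · rintro ⟨hνsum, hνv⟩
    refine ⟨(ν k - μ k) / c k, sub_eq_zero.1 (hk.eq_zero_of_succAbove ?_ ?_ ?_)⟩
    · simp [sum_sub_distrib, sum_add_distrib, ← mul_sum, hνsum, hμsum, hcsum]
    · simp [sub_smul, add_smul, sum_sub_distrib, sum_add_distrib, mul_smul, ← smul_sum, hνv, hμv,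
        hcv]
    · simp [div_mul_cancel₀ _ hck]
  · rintro ⟨t, rfl⟩
    exact sum_add_smul_eq_one_and_sum_smul_eq hcsum hcv hμsum hμv t

end AffineWeights

theorem AffineBasis.mem_interior_convexHull_iff {ι E : Type*} [Fintype ι] [NormedAddCommGroup E]
    [NormedSpace ℝ E] (b : AffineBasis ι ℝ E) {x : E} :
    x ∈ interior (convexHull ℝ (range b)) ↔
      ∃ w : ι → ℝ, (∀ i, 0 < w i) ∧ ∑ i, w i = 1 ∧ ∑ i, w i • b i = x := by
  rw [b.interior_convexHull, mem_ofPred_eq]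
  constructor
  · exact fun hx => ⟨fun i => b.coord i x, hx, b.sum_coord_apply_eq_one x,
      b.linear_combination_coord_eq_self x⟩
  · rintro ⟨w, hpos, hsum, rfl⟩ i
    rw [← univ.affineCombination_eq_linear_combination _ _ hsum,
      b.coord_apply_combination_of_mem (Finset.mem_univ i) hsum]
    exact hpos i

theorem mem_interior_convexHull_facet_iff {E : Type*} [NormedAddCommGroup E] [NormedSpace ℝ E]
    {N : ℕ} {v : Fin (N + 1) → E} {k : Fin (N + 1)}
    (hk : AffineIndependent ℝ fun i => v (k.succAbove i))
    (hspan : affineSpan ℝ (range fun i => v (k.succAbove i)) = ⊤) {c μ : Fin (N + 1) → ℝ}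
    {x : E} (hck : c k ≠ 0) (hcsum : ∑ i, c i = 0) (hcv : ∑ i, c i • v i = 0)
    (hμsum : ∑ i, μ i = 1) (hμv : ∑ i, μ i • v i = x) :
    x ∈ interior (convexHull ℝ (range fun i => v (k.succAbove i))) ↔ LineMeetsFacet μ c k := by
  let b : AffineBasis (Fin N) ℝ E := ⟨_, hk, hspan⟩
  have hline := sum_eq_one_and_sum_smul_eq_iff hk hck hcsum hcv hμsum hμv
  refine b.mem_interior_convexHull_iff.trans ((exists_pos_weights_succAbove_iff k).trans ?_)
  constructor
  · rintro ⟨ν, hνk, hpos, hν⟩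
    obtain ⟨t, rfl⟩ := (hline ν).1 hν
    exact ⟨t, by simpa using hνk, fun i hi => by simpa using hpos i hi⟩
  · rintro ⟨t, hkt, hpos⟩
    exact ⟨μ + t • c, by simpa using hkt, fun i hi => by simpa using hpos i hi,
      (hline _).2 ⟨t, rfl⟩⟩

theorem neg_one_pow_mul_ite_pos (k : ℕ) {D : ℝ} (hD : D ≠ 0) :
    (-1 : ℤ) ^ k * (if 0 < D then 1 else -1) = if 0 < (-1) ^ k * D then 1 else -1 := by
  rcases Nat.even_or_odd k with hk | hk <;> rcases hD.lt_or_gt with hD | hD <;>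
    simp [hk.neg_one_pow, hD, hD.not_gt]

/-- for `2n+2` points of `ℝ^{2n}` in general position (every
`2n+1` of them affinely independent, and the origin avoiding the convex hulls
of all subsets of at most `2n` of the points, hence all facets of all
sub-simplices), the alternating sum `Σ_k (-1)^k Δ(v_0,…,v̂_k,…,v_{2n+1})`
vanishes; i.e. `Δ` is an Alexander–Spanier `2n`-cocycle. -/
theorem simplexChar_cocycle (n : ℕ) (v : Fin (2 * n + 2) → (Fin (2 * n) → ℝ))
    (hindep : ∀ k : Fin (2 * n + 2),
      AffineIndependent ℝ (fun i : Fin (2 * n + 1) => v (k.succAbove i)))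
    (havoid : ∀ s : Finset (Fin (2 * n + 2)), s.card ≤ 2 * n →
      (0 : Fin (2 * n) → ℝ) ∉ convexHull ℝ (v '' ↑s)) :
    ∑ k : Fin (2 * n + 2), ((-1 : ℤ) ^ (k : ℕ)) *
      simplexChar n (fun i => v (k.succAbove i)) = 0 := by
  have hspan : ∀ k : Fin (2 * n + 2), affineSpan ℝ (range fun i => v (k.succAbove i)) = ⊤ :=
    fun k => (hindep k).affineSpan_eq_top_iff_card_eq_finrank_add_one.2 (by simp)
  set c := signedFacetDet v
  have hc : ∀ k, c k ≠ 0 := fun k => signedFacetDet_ne_zero (hindep k)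
  obtain ⟨hcv, hcsum⟩ := sum_signedFacetDet_smul_eq_zero_and_sum_eq_zero v
  obtain ⟨μ, hμsum, hμv⟩ := exists_sum_eq_one_and_sum_smul_eq (hspan 0) 0
  have hsep : LineAvoidsRidges μ c := fun t hnonneg i j hi hj =>
    have hν := sum_add_smul_eq_one_and_sum_smul_eq hcsum hcv hμsum hμv t
    eq_of_apply_eq_zero_of_forall_notMem_convexHull havoid (fun l => by simpa using hnonneg l)
      hν.1 hν.2 (by simpa using hi) (by simpa using hj)
  have hdet : ∀ k : Fin (2 * n + 2), (of fun i => Fin.snoc (v (k.succAbove i)) (1 : ℝ)).det =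
      (of fun i j : Fin (2 * n) => v (k.succAbove i.succ) j - v (k.succAbove 0) j).det := by
    intro k
    rw [det_of_snoc_one, pow_mul, neg_one_sq, one_pow, one_mul]
  calc ∑ k : Fin (2 * n + 2), (-1 : ℤ) ^ (k : ℕ) * simplexChar n (fun i => v (k.succAbove i))
      = ∑ k, (if LineMeetsFacet μ c k then (if 0 < c k then 1 else -1) else 0 : ℤ) := by
        refine sum_congr rfl fun k _ => ?_
        rw [simplexChar, mem_interior_convexHull_facet_iff (hindep k) (hspan k) (hc k) hcsum hcv
          hμsum hμv, mul_ite, mul_zero, ← hdet,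
          neg_one_pow_mul_ite_pos _ (hindep k).det_of_snoc_one_ne_zero]
        rfl
    _ = 0 := sum_sign_lineMeetsFacet_eq_zero hc hcsum hsep
end
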